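/- Fix integers n ≥ 1 and k ≥ 1, positive integers r₁,…,r_k, and for each i ∈ {1,…,k} a tuple of words b_{i,1},…,b_{i,r_i} in the free group on n generators x₁,…,xₙ. Then there exists a first-order formula ε(x₁,…,xₙ) in the language of groups such that for every torsion-free commutative-transitive group G in which every abelian subgroup is finitely generated, and for every tuple (s₁,…,sₙ) ∈ Gⁿ: G ⊨ ε(s₁,…,sₙ) if and only if for each i ∈ {1,…,k} there exists j with b_{i,j}(s₁,…,sₙ) ≠ 1, and for every j with b_{i,j}(s₁,…,sₙ) ≠ 1 the centralizer Z_G(b_{i,j}(s₁,…,sₙ)) is free abelian of rank rᵢ. -/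

import Mathlib

open FirstOrder
open scoped commutatorElement

/-- Function symbols of the first-order language of groups:
one constant (identity), one unary symbol (inversion), one binary symbol (multiplication). -/
def groupFunctions : ℕ → Type
  | 0 => Unit
  | 1 => Unit
  | 2 => Unit
  | _ => Empty

/-- The first-order language of groups. -/
def groupLang : FirstOrder.Language where
  Functions := groupFunctions
  Relations := fun _ => Empty

/-- Any group is a structure for the language of groups, with the obvious interpretations. -/
instance groupLangStructure (G : Type*) [Group G] : groupLang.Structure G where
  funMap := fun {n} f v =>
    match n, f, v with
    | 0, _, _ => (1 : G)
    | 1, _, v => (v 0)⁻¹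
    | 2, _, v => v 0 * v 1
    | _ + 3, f, _ => f.elim
  RelMap := fun {_} r _ => r.elim

/-- A subgroup `H ≤ G` is elementarily embedded if every first-order formula with
parameters from `H` holds in `H` iff it holds in `G`. -/
def ElemEmbedded {G : Type*} [Group G] (H : Subgroup G) : Prop :=
  ∀ (n : ℕ) (φ : groupLang.Formula (Fin n)) (v : Fin n → H),
    φ.Realize v ↔ φ.Realize (fun i => (v i : G))


/-!
Let `g` be a nontrivial value `b_{i,j}(s)` and `C = Z_G(g)`. Commutative transitivity makes `C`
abelian, and torsion-freeness makes it closed under square roots: if `t² ∈ C` and `t ≠ 1` then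
`t² ≠ 1`, and `t` commutes with `t²`, which commutes with `g`. So `C` is free abelian of some finite
rank `m`, and an element of `C` is a square in `C` exactly when it is a square in `G`. Since
`|C / C²| = 2 ^ m`, the rank is pinned down by the first-order statement "some `2 ^ r` elements of
`C` are pairwise incongruent modulo squares and every element of `C` is congruent to one of them",
which holds iff `m = r`.
-/

open FirstOrder Language Function

section SquareClasses

variable {A B ι : Type*} [Group A]

def IsSquareClassTransversal (y : ι → A) : Prop :=
  Pairwise (fun a c => ¬IsSquare (y a * (y c)⁻¹)) ∧ ∀ z, ∃ a, IsSquare (z * (y a)⁻¹)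

lemma isSquareClassTransversal_iff_bijective {f : A → B}
    (hf : ∀ u v, IsSquare (u * v⁻¹) ↔ f u = f v) (hsurj : Surjective f) {y : ι → A} :
    IsSquareClassTransversal y ↔ Bijective (f ∘ y) := by
  simp only [IsSquareClassTransversal, hf]
  refine and_congr ⟨fun h a c hac => not_not.mp fun hne => h hne hac,
    fun h a c hne hac => hne (h hac)⟩ ⟨fun h b => ?_, fun h z => ?_⟩
  · obtain ⟨z, rfl⟩ := hsurj b
    obtain ⟨a, ha⟩ := h z
    exact ⟨a, ha.symm⟩
  · obtain ⟨a, ha⟩ := h (f z)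
    exact ⟨a, ha.symm⟩

lemma exists_isSquareClassTransversal_iff_card_eq [Finite B] {f : A → B}
    (hf : ∀ u v, IsSquare (u * v⁻¹) ↔ f u = f v) (hsurj : Surjective f) (N : ℕ) :
    (∃ y : Fin N → A, IsSquareClassTransversal y) ↔ Nat.card B = N := by
  simp only [isSquareClassTransversal_iff_bijective hf hsurj]
  constructor
  · rintro ⟨y, hy⟩
    rw [← Nat.card_eq_of_bijective _ hy, Nat.card_eq_fintype_card, Fintype.card_fin]
  · intro hB
    have : Fintype B := Fintype.ofFinite B
    let e : Fin N ≃ B := (Fintype.equivFinOfCardEq (by rwa [← Nat.card_eq_fintype_card])).symm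
    refine ⟨surjInv hsurj ∘ e, ?_⟩
    rw [← comp_assoc, comp_surjInv hsurj]
    exact e.bijective

lemma isSquare_mulEquiv_iff {A' : Type*} [Group A'] (e : A ≃* A') {u : A} :
    IsSquare (e u) ↔ IsSquare u :=
  ⟨fun h => by simpa using h.map e.symm, IsSquare.map e⟩

end SquareClasses

section FreeAbelian

variable {m : ℕ}

def parity (z : Multiplicative (Fin m → ℤ)) : Fin m → ZMod 2 := fun i => (z.toAdd i : ZMod 2)

lemma isSquare_mul_inv_iff_parity_eq (u v : Multiplicative (Fin m → ℤ)) :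
    IsSquare (u * v⁻¹) ↔ parity u = parity v := by
  have hsq : IsSquare (u * v⁻¹) ↔ ∀ i, Even (u.toAdd i - v.toAdd i) := by
    rw [← ofAdd_toAdd (u * v⁻¹), isSquare_ofAdd_iff]
    exact ⟨fun ⟨r, hr⟩ i => ⟨r i, congrFun hr i⟩,
      fun h => by choose r hr using h; exact ⟨r, funext hr⟩⟩
  simp only [hsq, parity, funext_iff, ← ZMod.intCast_eq_zero_iff_even, Int.cast_sub, sub_eq_zero]

lemma parity_surjective : Surjective (parity (m := m)) := fun w =>
  ⟨Multiplicative.ofAdd fun i => ((w i).cast : ℤ), funext fun i => by simp [parity]⟩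

lemma exists_isSquareClassTransversal_iff_of_mulEquiv {A : Type*} [Group A]
    (e : A ≃* Multiplicative (Fin m → ℤ)) (N : ℕ) :
    (∃ y : Fin N → A, IsSquareClassTransversal y) ↔ N = 2 ^ m := by
  have hf : ∀ u v : A, IsSquare (u * v⁻¹) ↔ parity (e u) = parity (e v) := fun u v => by
    rw [← isSquare_mul_inv_iff_parity_eq, ← map_inv, ← map_mul, isSquare_mulEquiv_iff]
  rw [exists_isSquareClassTransversal_iff_card_eq (f := parity ∘ e) hf
    (parity_surjective.comp e.surjective), eq_comm]
  simp [Nat.card_eq_fintype_card, ZMod.card]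

lemma CommGroup.exists_mulEquiv_multiplicative_int_pi (H : Type*) [CommGroup H]
    [IsMulTorsionFree H] [Group.FG H] :
    ∃ m : ℕ, Nonempty (H ≃* Multiplicative (Fin m → ℤ)) :=
  ⟨_, ⟨AddEquiv.toMultiplicativeRight (Module.finBasis ℤ (Additive H)).equivFun.toAddEquiv⟩⟩

lemma nonempty_mulEquiv_iff_exists_isSquareClassTransversal (H : Type*) [CommGroup H]
    [IsMulTorsionFree H] [Group.FG H] (r : ℕ) :
    Nonempty (H ≃* Multiplicative (Fin r → ℤ)) ↔
      ∃ y : Fin (2 ^ r) → H, IsSquareClassTransversal y := by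
  refine ⟨fun ⟨e⟩ => (exists_isSquareClassTransversal_iff_of_mulEquiv e _).mpr rfl, fun h => ?_⟩
  obtain ⟨m, ⟨e⟩⟩ := CommGroup.exists_mulEquiv_multiplicative_int_pi H
  obtain rfl : r = m :=
    Nat.pow_right_injective le_rfl ((exists_isSquareClassTransversal_iff_of_mulEquiv e _).mp h)
  exact ⟨e⟩

end FreeAbelian

lemma Subgroup.isSquare_coe_iff {G : Type*} [Group G] {H : Subgroup G}
    (hH : ∀ t : G, t * t ∈ H → t ∈ H) (u : H) : IsSquare (u : G) ↔ IsSquare u :=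
  ⟨fun ⟨t, ht⟩ => ⟨⟨t, hH t (ht ▸ u.2)⟩, Subtype.ext ht⟩, IsSquare.map H.subtype⟩

lemma Subgroup.exists_isSquareClassTransversal_iff {G ι : Type*} [Group G] {H : Subgroup G}
    (hH : ∀ t : G, t * t ∈ H → t ∈ H) :
    (∃ y : ι → H, IsSquareClassTransversal y) ↔
      ∃ y : ι → G, (∀ a, y a ∈ H) ∧ Pairwise (fun a c => ¬IsSquare (y a * (y c)⁻¹)) ∧
        ∀ z ∈ H, ∃ a, IsSquare (z * (y a)⁻¹) := by
  have hsq : ∀ u v : H, IsSquare ((u : G) * (v : G)⁻¹) ↔ IsSquare (u * v⁻¹) := fun u v =>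
    isSquare_coe_iff hH (u * v⁻¹)
  constructor
  · rintro ⟨y, hpair, hcover⟩
    refine ⟨fun a => y a, fun a => (y a).2, fun a c hac h => hpair hac ((hsq _ _).mp h),
      fun z hz => ?_⟩
    obtain ⟨a, ha⟩ := hcover ⟨z, hz⟩
    exact ⟨a, (hsq ⟨z, hz⟩ (y a)).mpr ha⟩
  · rintro ⟨y, hyH, hpair, hcover⟩
    refine ⟨fun a => ⟨y a, hyH a⟩, fun a c hac h => hpair hac ((hsq ⟨_, hyH a⟩ ⟨_, hyH c⟩).mpr h),
      fun z => ?_⟩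
    obtain ⟨a, ha⟩ := hcover z z.2
    exact ⟨a, (hsq z ⟨_, hyH a⟩).mp ha⟩

section CommTransitive

def IsCommTransitive (G : Type*) [Group G] : Prop :=
  ∀ x y z : G, y ≠ 1 → ⁅x, y⁆ = 1 → ⁅y, z⁆ = 1 → ⁅x, z⁆ = 1

variable {G : Type*} [Group G]

lemma IsCommTransitive.commute {x y z : G} (hct : IsCommTransitive G) (hy : y ≠ 1)
    (hxy : Commute x y) (hyz : Commute y z) : Commute x z := by
  simp only [commute_iff_eq, ← commutatorElement_eq_one_iff_mul_comm] at *
  exact hct x y z hy hxy hyz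

lemma IsCommTransitive.mul_comm_of_mem_centralizer (hct : IsCommTransitive G) {g : G}
    (hg : g ≠ 1) {x y : G} (hx : x ∈ Subgroup.centralizer {g})
    (hy : y ∈ Subgroup.centralizer {g}) : x * y = y * x := by
  rw [Subgroup.mem_centralizer_singleton_iff] at hx hy
  exact hct.commute hg hx hy.symm

lemma IsCommTransitive.mem_centralizer_of_mul_self_mem
    (htf : ∀ g : G, g ≠ 1 → ¬IsOfFinOrder g) (hct : IsCommTransitive G) {g t : G}
    (ht : t * t ∈ Subgroup.centralizer {g}) : t ∈ Subgroup.centralizer {g} := by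
  obtain rfl | htne := eq_or_ne t 1
  · exact one_mem _
  have htt : t * t ≠ 1 := fun htt =>
    htf t htne (isOfFinOrder_iff_pow_eq_one.mpr ⟨2, two_pos, by rw [sq, htt]⟩)
  rw [Subgroup.mem_centralizer_singleton_iff] at ht ⊢
  exact hct.commute htt ((Commute.refl t).mul_right (Commute.refl t)) ht

lemma IsCommTransitive.nonempty_centralizer_mulEquiv_iff
    (htf : ∀ g : G, g ≠ 1 → ¬IsOfFinOrder g) (hct : IsCommTransitive G)
    (hfg : ∀ A : Subgroup G, (∀ a ∈ A, ∀ b ∈ A, a * b = b * a) → A.FG)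
    {g : G} (hg : g ≠ 1) (r : ℕ) :
    Nonempty (Subgroup.centralizer {g} ≃* Multiplicative (Fin r → ℤ)) ↔
      ∃ y : Fin (2 ^ r) → G, (∀ a, y a ∈ Subgroup.centralizer {g}) ∧
        Pairwise (fun a c => ¬IsSquare (y a * (y c)⁻¹)) ∧
        ∀ z ∈ Subgroup.centralizer {g}, ∃ a, IsSquare (z * (y a)⁻¹) := by
  have hcomm : ∀ x ∈ Subgroup.centralizer {g}, ∀ y ∈ Subgroup.centralizer {g}, x * y = y * x :=
    fun x hx y hy => hct.mul_comm_of_mem_centralizer hg hx hy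
  let _ : CommGroup (Subgroup.centralizer {g}) :=
    { mul_comm := fun x y => Subtype.ext (hcomm x x.2 y y.2) }
  have : Group.FG (Subgroup.centralizer {g}) := (Group.fg_iff_subgroup_fg _).mpr (hfg _ hcomm)
  have : IsMulTorsionFree (Subgroup.centralizer {g}) :=
    isMulTorsionFree_iff_not_isOfFinOrder.mpr fun x hx hfin =>
      htf x (by exact_mod_cast hx) (Submonoid.isOfFinOrder_coe.mpr hfin)
  rw [nonempty_mulEquiv_iff_exists_isSquareClassTransversal,
    Subgroup.exists_isSquareClassTransversal_iff fun t => hct.mem_centralizer_of_mul_self_mem htf]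

end CommTransitive

section Formulas

open Term

variable {α G : Type*} [Group G]

def oneTerm : groupLang.Term α := func (l := 0) (() : Unit) ![]

def invTerm (t : groupLang.Term α) : groupLang.Term α := func (l := 1) (() : Unit) ![t]

def mulTerm (t u : groupLang.Term α) : groupLang.Term α := func (l := 2) (() : Unit) ![t, u]

@[simp] lemma realize_oneTerm (v : α → G) : (oneTerm : groupLang.Term α).realize v = 1 := rfl

@[simp] lemma realize_invTerm (v : α → G) (t : groupLang.Term α) :
    (invTerm t).realize v = (t.realize v)⁻¹ := rfl

@[simp] lemma realize_mulTerm (v : α → G) (t u : groupLang.Term α) :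
    (mulTerm t u).realize v = t.realize v * u.realize v := rfl

def listWordTerm : List (α × Bool) → groupLang.Term α
  | [] => oneTerm
  | p :: L => mulTerm (cond p.2 (var p.1) (invTerm (var p.1))) (listWordTerm L)

lemma realize_listWordTerm (v : α → G) (L : List (α × Bool)) :
    (listWordTerm L).realize v = (L.map fun p => cond p.2 (v p.1) (v p.1)⁻¹).prod := by
  induction L with
  | nil => rfl
  | cons p L ih => obtain ⟨a, _ | _⟩ := p <;> simp [listWordTerm, ih]

def wordTerm [DecidableEq α] (w : FreeGroup α) : groupLang.Term α := listWordTerm w.toWord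

@[simp] lemma realize_wordTerm [DecidableEq α] (v : α → G) (w : FreeGroup α) :
    (wordTerm w).realize v = FreeGroup.lift v w := by
  rw [wordTerm, realize_listWordTerm, ← FreeGroup.lift_mk, FreeGroup.mk_toWord]

noncomputable def isSquareFormula (t : groupLang.Term α) : groupLang.Formula α :=
  Formula.iExs Unit (equal (t.relabel Sum.inl) (mulTerm (var (Sum.inr ())) (var (Sum.inr ()))))

@[simp] lemma realize_isSquareFormula (v : α → G) (xs : Fin 0 → G) (t : groupLang.Term α) :
    BoundedFormula.Realize (isSquareFormula t) v xs ↔ IsSquare (t.realize v) := by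
  rw [Subsingleton.elim xs default]
  simp only [isSquareFormula, BoundedFormula.realize_iExs, Formula.realize_equal, realize_relabel,
    Sum.elim_comp_inl, realize_mulTerm, realize_var, Sum.elim_inr, IsSquare]
  exact ⟨fun ⟨i, h⟩ => ⟨i (), h⟩, fun ⟨r, h⟩ => ⟨fun _ => r, h⟩⟩

def isOneFormula (t : groupLang.Term α) : groupLang.Formula α := equal t oneTerm

@[simp] lemma realize_isOneFormula (v : α → G) (xs : Fin 0 → G) (t : groupLang.Term α) :
    BoundedFormula.Realize (isOneFormula t) v xs ↔ t.realize v = 1 := by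
  rw [Subsingleton.elim xs default]
  exact Formula.realize_equal

def commuteFormula (t u : groupLang.Term α) : groupLang.Formula α :=
  equal (mulTerm t u) (mulTerm u t)

@[simp] lemma realize_commuteFormula (v : α → G) (xs : Fin 0 → G) (t u : groupLang.Term α) :
    BoundedFormula.Realize (commuteFormula t u) v xs ↔
      t.realize v * u.realize v = u.realize v * t.realize v := by
  rw [Subsingleton.elim xs default]
  exact Formula.realize_equal

noncomputable def centralizerRankFormula (m : ℕ) (t : groupLang.Term α) : groupLang.Formula α :=
  Formula.iExs (Fin (2 ^ m))
    ((BoundedFormula.iInf fun a => commuteFormula (var (Sum.inr a)) (t.relabel Sum.inl)) ⊓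
      (BoundedFormula.iInf fun p : {p : Fin (2 ^ m) × Fin (2 ^ m) // p.1 ≠ p.2} =>
        (isSquareFormula (mulTerm (var (Sum.inr p.1.1)) (invTerm (var (Sum.inr p.1.2))))).not) ⊓
      Formula.iAlls Unit
        ((commuteFormula (var (Sum.inr ())) (t.relabel (Sum.inl ∘ Sum.inl))).imp
          (BoundedFormula.iSup fun a =>
            isSquareFormula (mulTerm (var (Sum.inr ())) (invTerm (var (Sum.inl (Sum.inr a))))))))

@[simp] lemma realize_centralizerRankFormula (v : α → G) (xs : Fin 0 → G) (m : ℕ)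
    (t : groupLang.Term α) :
    BoundedFormula.Realize (centralizerRankFormula m t) v xs ↔
      ∃ y : Fin (2 ^ m) → G, (∀ a, y a ∈ Subgroup.centralizer {t.realize v}) ∧
        Pairwise (fun a c => ¬IsSquare (y a * (y c)⁻¹)) ∧
        ∀ z ∈ Subgroup.centralizer {t.realize v}, ∃ a, IsSquare (z * (y a)⁻¹) := by
  rw [Subsingleton.elim xs default]
  simp only [centralizerRankFormula, ne_eq, comp_def, BoundedFormula.realize_iExs, Formula.Realize,
    BoundedFormula.realize_inf, BoundedFormula.realize_iInf, realize_commuteFormula, realize_var,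
    Sum.elim_inr, realize_relabel, Sum.elim_inl, BoundedFormula.realize_not,
    realize_isSquareFormula, realize_mulTerm, realize_invTerm, Subtype.forall, Prod.forall,
    BoundedFormula.realize_iAlls, BoundedFormula.realize_imp, BoundedFormula.realize_iSup,
    Subgroup.mem_centralizer_singleton_iff, and_assoc]
  exact exists_congr fun y => and_congr_right' <| and_congr_right' <|
    ⟨fun h z hz => h (fun _ => z) hz, fun h z hz => h (z ()) hz⟩

noncomputable def edgeRankFormula [DecidableEq α] {k : ℕ} (r : Fin k → ℕ)
    (b : ∀ i : Fin k, Fin (r i) → FreeGroup α) : groupLang.Formula α :=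
  BoundedFormula.iInf fun i =>
    (BoundedFormula.iSup fun j => (isOneFormula (wordTerm (b i j))).not) ⊓
      BoundedFormula.iInf fun j =>
        isOneFormula (wordTerm (b i j)) ⊔ centralizerRankFormula (r i) (wordTerm (b i j))

lemma realize_edgeRankFormula [DecidableEq α] {k : ℕ} (r : Fin k → ℕ)
    (b : ∀ i : Fin k, Fin (r i) → FreeGroup α) (s : α → G) :
    (edgeRankFormula r b).Realize s ↔ ∀ i,
      (∃ j, FreeGroup.lift s (b i j) ≠ 1) ∧
      ∀ j, FreeGroup.lift s (b i j) = 1 ∨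
        ∃ y : Fin (2 ^ r i) → G, (∀ a, y a ∈ Subgroup.centralizer {FreeGroup.lift s (b i j)}) ∧
          Pairwise (fun a c => ¬IsSquare (y a * (y c)⁻¹)) ∧
          ∀ z ∈ Subgroup.centralizer {FreeGroup.lift s (b i j)}, ∃ a, IsSquare (z * (y a)⁻¹) := by
  simp only [Formula.Realize, edgeRankFormula, BoundedFormula.realize_iInf,
    BoundedFormula.realize_inf, BoundedFormula.realize_iSup, BoundedFormula.realize_not,
    BoundedFormula.realize_sup, realize_isOneFormula, realize_centralizerRankFormula,
    realize_wordTerm, ne_eq]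

end Formulas

theorem exists_formula_edge_ranks_general (n k : ℕ) (r : Fin k → ℕ)
    (b : ∀ i : Fin k, Fin (r i) → FreeGroup (Fin n)) :
    ∃ φ : groupLang.Formula (Fin n),
      ∀ (G : Type*) [Group G],
        (∀ g : G, g ≠ 1 → ¬IsOfFinOrder g) →
        (∀ x y z : G, y ≠ 1 → ⁅x, y⁆ = 1 → ⁅y, z⁆ = 1 → ⁅x, z⁆ = 1) →
        (∀ A : Subgroup G, (∀ a ∈ A, ∀ b ∈ A, a * b = b * a) → A.FG) →
        ∀ s : Fin n → G,
          (φ.Realize s ↔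
            ∀ i : Fin k,
              (∃ j : Fin (r i), FreeGroup.lift s (b i j) ≠ 1) ∧
              (∀ j : Fin (r i), FreeGroup.lift s (b i j) ≠ 1 →
                Nonempty ((Subgroup.centralizer {FreeGroup.lift s (b i j)})
                  ≃* Multiplicative (Fin (r i) → ℤ)))) := by
  refine ⟨edgeRankFormula r b, fun G _ htf hct hfg s => ?_⟩
  rw [realize_edgeRankFormula]
  refine forall_congr' fun i => and_congr_right' <| forall_congr' fun j => ?_
  rw [or_iff_not_imp_left]
  exact imp_congr_right fun hj =>
    (IsCommTransitive.nonempty_centralizer_mulEquiv_iff htf hct hfg hj _).symm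

/-- Fix `n, k ≥ 1`, positive integers `r₁,…,r_k`, and words `b_{i,1},…,b_{i,rᵢ}` in the
free group on `n` generators.  Then there is a first-order formula `ε(x₁,…,xₙ)` such
that for every torsion-free commutative-transitive group `G` whose abelian subgroups
are all finitely generated and every tuple `s ∈ Gⁿ`: `G ⊨ ε(s)` iff for each `i` some
`b_{i,j}(s) ≠ 1`, and for every `j` with `b_{i,j}(s) ≠ 1` the centralizer
`Z_G(b_{i,j}(s))` is free abelian of rank `rᵢ`. -/
theorem exists_formula_edge_ranks (n k : ℕ) (hn : 1 ≤ n) (hk : 1 ≤ k)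
    (r : Fin k → ℕ) (hr : ∀ i, 1 ≤ r i)
    (b : ∀ i : Fin k, Fin (r i) → FreeGroup (Fin n)) :
    ∃ φ : groupLang.Formula (Fin n),
      ∀ (G : Type*) [Group G],
        (∀ g : G, g ≠ 1 → ¬IsOfFinOrder g) →
        (∀ x y z : G, y ≠ 1 → ⁅x, y⁆ = 1 → ⁅y, z⁆ = 1 → ⁅x, z⁆ = 1) →
        (∀ A : Subgroup G, (∀ a ∈ A, ∀ b ∈ A, a * b = b * a) → A.FG) →
        ∀ s : Fin n → G,
          (φ.Realize s ↔
            ∀ i : Fin k,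
              (∃ j : Fin (r i), FreeGroup.lift s (b i j) ≠ 1) ∧
              (∀ j : Fin (r i), FreeGroup.lift s (b i j) ≠ 1 →
                Nonempty ((Subgroup.centralizer {FreeGroup.lift s (b i j)})
                  ≃* Multiplicative (Fin (r i) → ℤ)))) :=
  exists_formula_edge_ranks_general n k r b
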